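/- arXiv:1604.07396 — 3 statements merged into one kernel-verified Lean document; each statement's English description precedes it below -/
import Mathlib

section
/- If x_0 = 1 and x_n = f_{n+1}² (∑_{j=1}^{n} 1/(f_j f_{j+1}) + 1) for n ≥ 1, then the F̂-transform of x is the constant sequence e = (1,1,1,...), i.e. (f_n/f_{n+1}) x_n − (f_{n+1}/f_n) x_{n-1} = 1 for all n ≥ 1 and x_0 = 1. -/
/-! Writing `S n = ∑_{j=1}^n 1/(f_j f_{j+1})`, the hypothesis says `x n = f_{n+1}² (S n + 1)` for every
`n`, including `n = 0` since `f_1 = 1` and `S 0 = 0`. Then the `n`-th term of `F̂ x` is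
`f_n f_{n+1} (S n - S (n-1)) = 1`: the two weights `f_n/f_{n+1}` and `f_{n+1}/f_n` exactly cancel
the squares in front of consecutive terms. -/

open Filter Finset

noncomputable def fibR : ℕ → ℝ
  | 0 => 1
  | 1 => 1
  | (n + 2) => fibR (n + 1) + fibR n

noncomputable def Fhat (x : ℕ → ℝ) (n : ℕ) : ℝ :=
  fibR n / fibR (n + 1) * x n - fibR (n + 1) / fibR n * (if n = 0 then 0 else x (n - 1))

noncomputable def Fbar (Λ : ℕ → ℝ) (x : ℕ → ℝ) (n : ℕ) : ℝ :=
  (1 / Λ n) * ∑ k ∈ Finset.range (n + 1),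
    (Λ k - if k = 0 then 0 else Λ (k - 1)) *
      (fibR k / fibR (k + 1) * x k -
        fibR (k + 1) / fibR k * (if k = 0 then 0 else x (k - 1)))

lemma fibR_pos : ∀ n, 0 < fibR n
  | 0 => one_pos
  | 1 => one_pos
  | (n + 2) => by
      rw [fibR]
      exact add_pos (fibR_pos (n + 1)) (fibR_pos n)

lemma fibR_ne_zero (n : ℕ) : fibR n ≠ 0 := (fibR_pos n).ne'

lemma Fhat_zero (x : ℕ → ℝ) : Fhat x 0 = x 0 := by
  simp [Fhat, fibR]

lemma Fhat_succ (x : ℕ → ℝ) (n : ℕ) :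
    Fhat x (n + 1) = fibR (n + 1) / fibR (n + 2) * x (n + 1) - fibR (n + 2) / fibR (n + 1) * x n := by
  simp [Fhat]

lemma div_mul_sq_mul_sub_div_mul_sq_mul {a b s t : ℝ} (ha : a ≠ 0) (hb : b ≠ 0)
    (h : t = s + 1 / (a * b)) :
    a / b * (b ^ 2 * t) - b / a * (a ^ 2 * s) = 1 := by
  subst h
  field_simp
  ring

theorem fhat_eq_one (x : ℕ → ℝ) (hx0 : x 0 = 1)
    (hx : ∀ n, 1 ≤ n → x n =
      fibR (n + 1) ^ 2 * (∑ j ∈ Finset.Icc 1 n, 1 / (fibR j * fibR (j + 1)) + 1)) :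
    ∀ n, Fhat x n = 1 := by
  have hx_all : ∀ n, x n =
      fibR (n + 1) ^ 2 * (∑ j ∈ Finset.Icc 1 n, 1 / (fibR j * fibR (j + 1)) + 1) := by
    rintro (_ | n)
    · simp [hx0, fibR]
    · exact hx _ n.succ_pos
  rintro (_ | n)
  · rw [Fhat_zero, hx0]
  · rw [Fhat_succ, hx_all n, hx_all (n + 1)]
    refine div_mul_sq_mul_sub_div_mul_sq_mul (fibR_ne_zero _) (fibR_ne_zero _) ?_
    rw [sum_Icc_succ_top (by omega)]
    ring
end

section
/- Let λ = (λ_k) be a strictly increasing sequence of positive reals tending to infinity (with the convention λ_{-1} = 0). If x_n = f_{n+1}² for all n, then the sequence F̄_n(x) = (1/λ_n) ∑_{k=0}^{n} (λ_k − λ_{k-1}) ((f_k/f_{k+1}) x_k − (f_{k+1}/f_k) x_{k-1}) equals λ_0/λ_n for every n, and hence tends to 0 as n → ∞. -/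
/-! With `x k = f_{k+1}²` both parts of the `k`-th summand equal `f_k f_{k+1}` for `k ≥ 1`, so only
the `k = 0` summand `λ_0 · (f_0 / f_1) · f_1² = λ_0` survives. -/

open Filter Finset

lemma div_mul_sq_eq_mul {K : Type*} [DivisionRing K] (a b : K) : a / b * b ^ 2 = a * b := by
  rcases eq_or_ne b 0 with rfl | hb
  · simp
  · rw [sq, ← mul_assoc, div_mul_cancel₀ a hb]

lemma fbar_eq_of_fib_sq (Λ x : ℕ → ℝ) (hx : ∀ n, x n = fibR (n + 1) ^ 2) (n : ℕ) :
    Fbar Λ x n = Λ 0 / Λ n := by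
  have summand_succ (k : ℕ) :
      fibR (k + 1) / fibR (k + 2) * x (k + 1) - fibR (k + 2) / fibR (k + 1) * x k = 0 := by
    rw [hx, hx, div_mul_sq_eq_mul, div_mul_sq_eq_mul, sub_eq_zero, mul_comm]
  rw [Fbar, Finset.sum_range_succ', Finset.sum_eq_zero fun k _ => by simp [summand_succ]]
  simp [hx 0, fibR, div_eq_inv_mul]

theorem fbar_of_fib_sq_general (Λ : ℕ → ℝ)
    (hlim : Tendsto Λ atTop atTop) (x : ℕ → ℝ) (hx : ∀ n, x n = fibR (n + 1) ^ 2) :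
    (∀ n, Fbar Λ x n = Λ 0 / Λ n) ∧
      Tendsto (Fbar Λ x) atTop (nhds 0) := by
  have hFbar := fbar_eq_of_fib_sq Λ x hx
  refine ⟨hFbar, ?_⟩
  simpa only [← hFbar] using (tendsto_const_nhds (x := Λ 0)).div_atTop hlim

theorem fbar_of_fib_sq (Λ : ℕ → ℝ) (hmono : StrictMono Λ) (hpos : ∀ k, 0 < Λ k)
    (hlim : Tendsto Λ atTop atTop) (x : ℕ → ℝ) (hx : ∀ n, x n = fibR (n + 1) ^ 2) :
    (∀ n, Fbar Λ x n = Λ 0 / Λ n) ∧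
      Tendsto (Fbar Λ x) atTop (nhds 0) :=
  fbar_of_fib_sq_general Λ hlim x hx
end

section
/- Given y ∈ c₀, the sequence x defined by x_k = ∑_{j=0}^{k} ∑_{i=j-1}^{j} (−1)^{j−i} (λ_i y_i)/(λ_j − λ_{j-1}) · f_{k+1}²/(f_j f_{j+1}) satisfies F̄_n(x) = y_n for all n; hence x ∈ c₀^λ(F̂) and the transform F̄ : c₀^λ(F̂) → c₀ is surjective. -/
open Filter Finset

def backDiff (u : ℕ → ℝ) (k : ℕ) : ℝ := u k - if k = 0 then 0 else u (k - 1)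

lemma sum_range_backDiff (u : ℕ → ℝ) (n : ℕ) : ∑ k ∈ range (n + 1), backDiff u k = u n := by
  induction n with
  | zero => simp [backDiff]
  | succ m ih => rw [sum_range_succ, ih, backDiff]; simp

lemma backDiff_pos_of_strictMono {u : ℕ → ℝ} (hu : StrictMono u) (h0 : 0 < u 0) (k : ℕ) :
    0 < backDiff u k := by
  cases k with
  | zero => simpa [backDiff] using h0
  | succ m => simpa [backDiff] using hu (Nat.lt_succ_self m)

lemma Fhat_of_eq_sum {a x : ℕ → ℝ}
    (hx : ∀ k, x k = ∑ j ∈ range (k + 1), a j * (fibR (k + 1) ^ 2 / (fibR j * fibR (j + 1))))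
    (k : ℕ) : Fhat x k = a k := by
  set S : ℕ → ℝ := fun k => ∑ j ∈ range (k + 1), a j / (fibR j * fibR (j + 1))
  have hxS : ∀ k, x k = fibR (k + 1) ^ 2 * S k := fun k => by
    rw [hx, mul_sum]
    exact sum_congr rfl fun j _ => by ring
  cases k with
  | zero => simp [Fhat, hxS, S, fibR]
  | succ m =>
    have hS : S (m + 1) = S m + a (m + 1) / (fibR (m + 1) * fibR (m + 2)) := sum_range_succ _ _
    simp only [Fhat, Nat.succ_ne_zero, if_false, Nat.add_sub_cancel, hxS, hS]
    field_simp [fibR_ne_zero]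
    ring

lemma Fbar_eq_of_backDiff_mul_Fhat {Λ x y : ℕ → ℝ}
    (h : ∀ k, backDiff Λ k * Fhat x k = backDiff (fun i => Λ i * y i) k) {n : ℕ} (hn : Λ n ≠ 0) :
    Fbar Λ x n = y n := by
  change 1 / Λ n * ∑ k ∈ range (n + 1), backDiff Λ k * Fhat x k = y n
  rw [sum_congr rfl fun k _ => h k, sum_range_backDiff]
  field_simp

theorem fbar_surjective_onto_c0_general (Λ : ℕ → ℝ) (hmono : StrictMono Λ) (hpos : ∀ k, 0 < Λ k)
    (y : ℕ → ℝ) (hy : Tendsto y atTop (nhds 0))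
    (x : ℕ → ℝ)
    (hx : ∀ k, x k = ∑ j ∈ Finset.range (k + 1),
      ((Λ j * y j - if j = 0 then 0 else Λ (j - 1) * y (j - 1)) /
          (Λ j - if j = 0 then 0 else Λ (j - 1))) *
        (fibR (k + 1) ^ 2 / (fibR j * fibR (j + 1)))) :
    (∀ n, Fbar Λ x n = y n) ∧ Tendsto (Fbar Λ x) atTop (nhds 0) := by
  have hFhat : ∀ k, Fhat x k = backDiff (fun i => Λ i * y i) k / backDiff Λ k :=
    Fhat_of_eq_sum hx
  have hFbar : ∀ n, Fbar Λ x n = y n := fun n =>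
    Fbar_eq_of_backDiff_mul_Fhat
      (fun k => by
        rw [hFhat, mul_div_cancel₀ _ (backDiff_pos_of_strictMono hmono (hpos 0) k).ne'])
      (hpos n).ne'
  exact ⟨hFbar, by rwa [funext hFbar]⟩

theorem fbar_surjective_onto_c0 (Λ : ℕ → ℝ) (hmono : StrictMono Λ) (hpos : ∀ k, 0 < Λ k)
    (hlim : Tendsto Λ atTop atTop) (y : ℕ → ℝ) (hy : Tendsto y atTop (nhds 0))
    (x : ℕ → ℝ)
    (hx : ∀ k, x k = ∑ j ∈ Finset.range (k + 1),
      ((Λ j * y j - if j = 0 then 0 else Λ (j - 1) * y (j - 1)) /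
          (Λ j - if j = 0 then 0 else Λ (j - 1))) *
        (fibR (k + 1) ^ 2 / (fibR j * fibR (j + 1)))) :
    (∀ n, Fbar Λ x n = y n) ∧ Tendsto (Fbar Λ x) atTop (nhds 0) :=
  fbar_surjective_onto_c0_general Λ hmono hpos y hy x hx
end
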